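/- Let G be an edge-ordered bigraph that avoids P_6^{-13254}. Then the spanning subgraph G_r of G formed by its right inclined edges avoids P_5^{+2143}. -/

import Mathlib

/-!
A copy `f 0, …, f 4` of `P₅^{+2143}` in `G_r` has `f 1` as left end of its edges `f 1 f 0` and
`f 1 f 2`, so right inclination gives `l(f 0) < l(f 1) ≤ L(f 1 f 2)`. Among the two edges at `f 0`
with label at most `l(f 0)` one avoids `f 3`; its other end `w` is a left vertex off the path,
and `w f 0` is smaller than `f 1 f 2`, the smallest edge of the path. Prepending `w` turns the
copy into a copy of `P₆^{-13254}` in `G`.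
-/

set_option maxHeartbeats 1000000

/-- An edge-ordered graph: a finite simple graph together with an injective
real labeling of its edges (inducing a linear order on the edge set). -/
structure EOGraph (V : Type) [Fintype V] where
  graph : SimpleGraph V
  label : Sym2 V → ℝ
  inj : ∀ e ∈ graph.edgeSet, ∀ f ∈ graph.edgeSet, label e = label f → e = f

/-- `G` contains `H`: an injective, adjacency-preserving, edge-order-respecting map. -/
def EOContains {V W : Type} [Fintype V] [Fintype W] (G : EOGraph V) (H : EOGraph W) : Prop :=
  ∃ f : W → V, Function.Injective f ∧
    (∀ a b, H.graph.Adj a b → G.graph.Adj (f a) (f b)) ∧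
    ∀ e ∈ H.graph.edgeSet, ∀ e' ∈ H.graph.edgeSet,
      H.label e < H.label e' → G.label (Sym2.map f e) < G.label (Sym2.map f e')

/-- The Turán number `ex_<(n, H)`: the maximum number of edges of an
edge-ordered graph on `n` vertices avoiding `H`. -/
noncomputable def exLT {W : Type} [Fintype W] (n : ℕ) (H : EOGraph W) : ℕ :=
  sSup {m | ∃ G : EOGraph (Fin n), ¬ EOContains G H ∧ G.graph.edgeSet.ncard = m}

/-- The reverse of an edge-ordered graph: same graph, reversed edge order. -/
def EOGraph.reverse {V : Type} [Fintype V] (G : EOGraph V) : EOGraph V where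
  graph := G.graph
  label := fun e => - G.label e
  inj := fun e he f hf h => G.inj e he f hf (neg_inj.mp h)

/-- Two edges (as elements of `Sym2 V`) are adjacent if they share a vertex. -/
def EdgesAdjacent {V : Type} (e f : Sym2 V) : Prop := ∃ v, v ∈ e ∧ v ∈ f

/-- `e` and `f` are consecutive edges of `G`: `e < f` with no edge strictly in between. -/
def Consecutive {V : Type} [Fintype V] (G : EOGraph V) (e f : Sym2 V) : Prop :=
  e ∈ G.graph.edgeSet ∧ f ∈ G.graph.edgeSet ∧ G.label e < G.label f ∧
    ¬ ∃ g ∈ G.graph.edgeSet, G.label e < G.label g ∧ G.label g < G.label f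

/-- A semi-caterpillar: the underlying graph is a tree with at least one edge, and any
pair of consecutive edges is adjacent or directly connected by an edge larger than both. -/
def IsSemiCaterpillar {V : Type} [Fintype V] (G : EOGraph V) : Prop :=
  G.graph.IsTree ∧ G.graph.edgeSet.Nonempty ∧
  ∀ e f, Consecutive G e f →
    EdgesAdjacent e f ∨
    ∃ u v, s(u, v) ∈ G.graph.edgeSet ∧ u ∈ e ∧ v ∈ f ∧
      G.label e < G.label s(u, v) ∧ G.label f < G.label s(u, v)

/-- The order chromatic number of `G` is at most `k`: there is a simple graph `H` with
chromatic number at most `k` all of whose edge-orderings contain `G`. -/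
def OrderChromAtMost {V : Type} [Fintype V] (G : EOGraph V) (k : ℕ) : Prop :=
  ∃ (m : ℕ) (H : SimpleGraph (Fin m)), H.chromaticNumber ≤ (k : ℕ∞) ∧
    ∀ K : EOGraph (Fin m), K.graph = H → EOContains K G

/-- The order chromatic number of `G` equals 2. -/
def HasOrderChrom2 {V : Type} [Fintype V] (G : EOGraph V) : Prop :=
  OrderChromAtMost G 2 ∧ ¬ OrderChromAtMost G 1

/-- A vertex is close if the edges incident to it form an interval in the edge order. -/
def CloseVertex {V : Type} [Fintype V] (G : EOGraph V) (v : V) : Prop :=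
  ∀ e ∈ G.graph.edgeSet, ∀ f ∈ G.graph.edgeSet, ∀ g ∈ G.graph.edgeSet,
    v ∈ e → v ∈ g → G.label e ≤ G.label f → G.label f ≤ G.label g → v ∈ f

/-- An edge-ordered bigraph: an edge-ordered graph with a proper 2-coloring of the
vertices into left (`false`) and right (`true`) vertices. -/
structure EOBigraph (V : Type) [Fintype V] where
  toEOGraph : EOGraph V
  side : V → Bool
  proper : ∀ u v, toEOGraph.graph.Adj u v → side u ≠ side v

/-- A right caterpillar: an edge-ordered bigraph whose underlying edge-ordered graph is a
semi-caterpillar and all of whose right vertices are close. -/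
def IsRightCaterpillar {V : Type} [Fintype V] (B : EOBigraph V) : Prop :=
  IsSemiCaterpillar B.toEOGraph ∧ ∀ v, B.side v = true → CloseVertex B.toEOGraph v

/-- Containment of edge-ordered bigraphs: additionally sides must be preserved. -/
def BContains {V W : Type} [Fintype V] [Fintype W] (G : EOBigraph V) (H : EOBigraph W) : Prop :=
  ∃ f : W → V, Function.Injective f ∧
    (∀ a b, H.toEOGraph.graph.Adj a b → G.toEOGraph.graph.Adj (f a) (f b)) ∧
    (∀ e ∈ H.toEOGraph.graph.edgeSet, ∀ e' ∈ H.toEOGraph.graph.edgeSet,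
      H.toEOGraph.label e < H.toEOGraph.label e' →
        G.toEOGraph.label (Sym2.map f e) < G.toEOGraph.label (Sym2.map f e')) ∧
    ∀ a, G.side (f a) = H.side a

/-- Isomorphism of edge-ordered bigraphs. -/
def BIsoTo {V W : Type} [Fintype W] [Fintype V] (H : EOBigraph W) (G : EOBigraph V) : Prop :=
  ∃ f : W ≃ V, (∀ a b, H.toEOGraph.graph.Adj a b ↔ G.toEOGraph.graph.Adj (f a) (f b)) ∧
    (∀ e ∈ H.toEOGraph.graph.edgeSet, ∀ e' ∈ H.toEOGraph.graph.edgeSet,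
      (H.toEOGraph.label e < H.toEOGraph.label e' ↔
        G.toEOGraph.label (Sym2.map f e) < G.toEOGraph.label (Sym2.map f e'))) ∧
    ∀ a, G.side (f a) = H.side a

/-- Isomorphism of edge-ordered graphs. -/
def EOIsoTo {V W : Type} [Fintype W] [Fintype V] (H : EOGraph W) (G : EOGraph V) : Prop :=
  ∃ f : W ≃ V, (∀ a b, H.graph.Adj a b ↔ G.graph.Adj (f a) (f b)) ∧
    ∀ e ∈ H.graph.edgeSet, ∀ e' ∈ H.graph.edgeSet,
      (H.label e < H.label e' ↔ G.label (Sym2.map f e) < G.label (Sym2.map f e'))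

/-- The labeling of the path graph on `Fin k` in which the edge `{i, i+1}` gets label `w i`. -/
def pathLabel {k : ℕ} (w : Fin k → ℝ) : Sym2 (Fin k) → ℝ :=
  Sym2.lift ⟨fun i j => w (min i j), fun i j => by simp [min_comm]⟩

lemma pathGraph_edge_form {k : ℕ} {e : Sym2 (Fin k)}
    (he : e ∈ (SimpleGraph.pathGraph k).edgeSet) :
    ∃ i j : Fin k, e = s(i, j) ∧ (i : ℕ) + 1 = (j : ℕ) := by
  induction e using Sym2.inductionOn with
  | hf a b =>
    rw [SimpleGraph.mem_edgeSet, SimpleGraph.pathGraph_adj] at he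
    rcases he with h | h
    · exact ⟨a, b, rfl, h⟩
    · exact ⟨b, a, Sym2.eq_swap, h⟩

/-- The edge-ordered path on `k` vertices whose edge labels, listed along the path,
are `w 0, w 1, …, w (k-2)`. -/
def pathEO (k : ℕ) (w : Fin k → ℝ) (hw : Function.Injective w) : EOGraph (Fin k) where
  graph := SimpleGraph.pathGraph k
  label := pathLabel w
  inj := by
    intro e he f hf hef
    obtain ⟨i, j, rfl, hij⟩ := pathGraph_edge_form he
    obtain ⟨i', j', rfl, hij'⟩ := pathGraph_edge_form hf
    have h1 : min i j = i := min_eq_left (Fin.le_def.mpr (by omega))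
    have h2 : min i' j' = i' := min_eq_left (Fin.le_def.mpr (by omega))
    simp only [pathLabel, Sym2.lift_mk] at hef
    rw [h1, h2] at hef
    have hii : i = i' := hw hef
    have hjj : j = j' := Fin.ext (by omega)
    rw [hii, hjj]

/-- The edge-ordered path with natural-number labels. -/
def pathEON (k : ℕ) (v : Fin k → ℕ) (hv : Function.Injective v) : EOGraph (Fin k) :=
  pathEO k (fun i => (v i : ℝ)) (fun a b h => hv (Nat.cast_injective h))

/-- The bipartition of the edge-ordered path `pathEON k v hv`; the starting vertex is a
right vertex iff `startRight` holds (right = `true`, left = `false`). -/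
def pathEOBig (k : ℕ) (v : Fin k → ℕ) (hv : Function.Injective v) (startRight : Bool) :
    EOBigraph (Fin k) where
  toEOGraph := pathEON k v hv
  side := fun i => if i.val % 2 = 0 then startRight else !startRight
  proper := by
    intro a b hab
    have h : (SimpleGraph.pathGraph k).Adj a b := hab
    rw [SimpleGraph.pathGraph_adj] at h
    have hpar : (a.val % 2 = 0) ↔ ¬ (b.val % 2 = 0) := by omega
    by_cases ha : a.val % 2 = 0 <;> by_cases hb : b.val % 2 = 0 <;>
      simp_all

def P4_213 : EOGraph (Fin 4) := pathEON 4 ![2,1,3,0] (by decide)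
def P5_1342 : EOGraph (Fin 5) := pathEON 5 ![1,3,4,2,0] (by decide)
def P5_1432 : EOGraph (Fin 5) := pathEON 5 ![1,4,3,2,0] (by decide)
def P6_13254 : EOGraph (Fin 6) := pathEON 6 ![1,3,2,5,4,0] (by decide)
def P6_21354 : EOGraph (Fin 6) := pathEON 6 ![2,1,3,5,4,0] (by decide)
def P6plus_13254 : EOBigraph (Fin 6) := pathEOBig 6 ![1,3,2,5,4,0] (by decide) true
def P6minus_13254 : EOBigraph (Fin 6) := pathEOBig 6 ![1,3,2,5,4,0] (by decide) false
def P5plus_2143 : EOBigraph (Fin 5) := pathEOBig 5 ![2,1,4,3,0] (by decide) true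
def P5minus_2143 : EOBigraph (Fin 5) := pathEOBig 5 ![2,1,4,3,0] (by decide) false

/-- `B'` is an extension of `B`: it is obtained by adding new edges, each connecting an end
of the smallest edge `s(x,y)` of `B` to a new degree-1 vertex, all new edges being smaller
than `s(x,y)`, and all new edges at the left end being smaller than those at the right end. -/
def IsExtensionOf {V' V : Type} [Fintype V'] [Fintype V]
    (B' : EOBigraph V') (B : EOBigraph V) : Prop :=
  ∃ (ι : V → V') (x y : V),
    Function.Injective ι ∧
    B.toEOGraph.graph.Adj x y ∧ B.side x = false ∧ B.side y = true ∧
    (∀ e ∈ B.toEOGraph.graph.edgeSet, B.toEOGraph.label s(x, y) ≤ B.toEOGraph.label e) ∧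
    (∀ a b, B.toEOGraph.graph.Adj a b ↔ B'.toEOGraph.graph.Adj (ι a) (ι b)) ∧
    (∀ a, B'.side (ι a) = B.side a) ∧
    (∀ e ∈ B.toEOGraph.graph.edgeSet, ∀ f ∈ B.toEOGraph.graph.edgeSet,
      (B.toEOGraph.label e < B.toEOGraph.label f ↔
        B'.toEOGraph.label (Sym2.map ι e) < B'.toEOGraph.label (Sym2.map ι f))) ∧
    (∀ w : V', w ∉ Set.range ι →
      (∃! u, B'.toEOGraph.graph.Adj w u) ∧
      (∀ u, B'.toEOGraph.graph.Adj w u → (u = ι x ∨ u = ι y) ∧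
        B'.toEOGraph.label s(w, u) < B'.toEOGraph.label s(ι x, ι y))) ∧
    (∀ w w' : V', w ∉ Set.range ι → w' ∉ Set.range ι →
      B'.toEOGraph.graph.Adj w (ι x) → B'.toEOGraph.graph.Adj w' (ι y) →
      B'.toEOGraph.label s(w, ι x) < B'.toEOGraph.label s(w', ι y))

/-- A bundled edge-ordered bigraph (on some `Fin n`). -/
structure BundledBigraph where
  n : ℕ
  big : EOBigraph (Fin n)

/-- `B` is (isomorphic to) `T₀`, the edge-ordered bigraph with one edge and two vertices. -/
def IsT0 {V : Type} [Fintype V] (B : EOBigraph V) : Prop :=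
  Fintype.card V = 2 ∧ ∀ u v : V, u ≠ v → B.toEOGraph.graph.Adj u v

/-- `B` can be obtained (up to isomorphism) from `T₀` by a sequence of `i` extensions. -/
def ReachedInSteps {V : Type} [Fintype V] (i : ℕ) (B : EOBigraph V) : Prop :=
  ∃ f : ℕ → BundledBigraph, IsT0 (f 0).big ∧ BIsoTo (f i).big B ∧
    ∀ j < i, IsExtensionOf (f (j+1)).big (f j).big

/-- The recursive depth of a right caterpillar: the minimum number of extension steps
needed to obtain it from `T₀`. -/
def HasRecursiveDepth {V : Type} [Fintype V] (B : EOBigraph V) (i : ℕ) : Prop :=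
  ReachedInSteps i B ∧ ∀ j < i, ¬ ReachedInSteps j B

/-- An edge `e` (with left end `x` and right end `y`) is `c`-left-leaning: there are `c` edges
at `x` and `c` edges at `y` with every edge of the latter set larger than every edge of the
former, but smaller than `e`. -/
def LeftLeaning {V : Type} [Fintype V] (c : ℕ) (G : EOBigraph V) (e : Sym2 V) : Prop :=
  ∃ x y : V, e = s(x, y) ∧ e ∈ G.toEOGraph.graph.edgeSet ∧
    G.side x = false ∧ G.side y = true ∧
    ∃ S S' : Finset (Sym2 V), S.card = c ∧ S'.card = c ∧
      (∀ f ∈ S, f ∈ G.toEOGraph.graph.edgeSet ∧ x ∈ f) ∧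
      (∀ f ∈ S', f ∈ G.toEOGraph.graph.edgeSet ∧ y ∈ f) ∧
      (∀ f ∈ S, ∀ f' ∈ S', G.toEOGraph.label f < G.toEOGraph.label f') ∧
      (∀ f' ∈ S', G.toEOGraph.label f' < G.toEOGraph.label e)

/-- An edge `e` (with left end `x` and right end `y`) is `c`-right-leaning. -/
def RightLeaning {V : Type} [Fintype V] (c : ℕ) (G : EOBigraph V) (e : Sym2 V) : Prop :=
  ∃ x y : V, e = s(x, y) ∧ e ∈ G.toEOGraph.graph.edgeSet ∧
    G.side x = false ∧ G.side y = true ∧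
    ∃ S S' : Finset (Sym2 V), S.card = c ∧ S'.card = c ∧
      (∀ f ∈ S, f ∈ G.toEOGraph.graph.edgeSet ∧ x ∈ f) ∧
      (∀ f ∈ S', f ∈ G.toEOGraph.graph.edgeSet ∧ y ∈ f) ∧
      (∀ f' ∈ S', ∀ f ∈ S, G.toEOGraph.label f' < G.toEOGraph.label f) ∧
      (∀ f ∈ S, G.toEOGraph.label f < G.toEOGraph.label e)

/-- The spanning sub-bigraph of `G` consisting of the edges satisfying `P`. -/
def bigraphRestrict {V : Type} [Fintype V] (G : EOBigraph V) (P : Sym2 V → Prop) :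
    EOBigraph V where
  toEOGraph :=
    { graph := SimpleGraph.fromEdgeSet {e | e ∈ G.toEOGraph.graph.edgeSet ∧ P e}
      label := G.toEOGraph.label
      inj := by
        intro e he f hf h
        rw [SimpleGraph.edgeSet_fromEdgeSet] at he hf
        exact G.toEOGraph.inj e he.1.1 f hf.1.1 h }
  side := G.side
  proper := by
    intro u v huv
    rw [SimpleGraph.fromEdgeSet_adj] at huv
    have h1 : s(u, v) ∈ G.toEOGraph.graph.edgeSet := huv.1.1
    exact G.proper u v ((SimpleGraph.mem_edgeSet _).mp h1)

/-- The spanning subgraph of the `c`-left-leaning edges. -/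
def leftSub {V : Type} [Fintype V] (c : ℕ) (G : EOBigraph V) : EOBigraph V :=
  bigraphRestrict G (LeftLeaning c G)

/-- The spanning subgraph of the `c`-right-leaning edges. -/
def rightSub {V : Type} [Fintype V] (c : ℕ) (G : EOBigraph V) : EOBigraph V :=
  bigraphRestrict G (RightLeaning c G)

/-- `G^{c-left}_i`: iteratively keep only `c`-left-leaning edges, `i` times. -/
def leftIter {V : Type} [Fintype V] (c i : ℕ) (G : EOBigraph V) : EOBigraph V :=
  (leftSub c)^[i] G

/-- `G^{c-right}_i`: iteratively keep only `c`-right-leaning edges, `i` times. -/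
def rightIter {V : Type} [Fintype V] (c i : ℕ) (G : EOBigraph V) : EOBigraph V :=
  (rightSub c)^[i] G

/-- The set of labels of edges incident to `v`. -/
def incidentLabels {V : Type} [Fintype V] (G : EOGraph V) (v : V) : Set ℝ :=
  G.label '' {e | e ∈ G.graph.edgeSet ∧ v ∈ e}

/-- The vertex label `l(v)`: the second smallest label among the edges incident to `v`
(meaningful when `v` has degree at least 2). -/
noncomputable def secondLabel {V : Type} [Fintype V] (G : EOGraph V) (v : V) : ℝ :=
  sInf (incidentLabels G v \ {sInf (incidentLabels G v)})

/-- `v` has degree at least 2. -/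
def DegTwo {V : Type} [Fintype V] (G : EOGraph V) (v : V) : Prop :=
  2 ≤ {e | e ∈ G.graph.edgeSet ∧ v ∈ e}.ncard

/-- An edge `xy` (left end `x`, right end `y`) is left inclined if `l(x) < l(y) ≤ L(xy)`. -/
def LeftInclined {V : Type} [Fintype V] (G : EOBigraph V) (e : Sym2 V) : Prop :=
  ∃ x y : V, e = s(x, y) ∧ e ∈ G.toEOGraph.graph.edgeSet ∧
    G.side x = false ∧ G.side y = true ∧
    DegTwo G.toEOGraph x ∧ DegTwo G.toEOGraph y ∧
    secondLabel G.toEOGraph x < secondLabel G.toEOGraph y ∧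
    secondLabel G.toEOGraph y ≤ G.toEOGraph.label e

/-- An edge `xy` (left end `x`, right end `y`) is right inclined if `l(y) < l(x) ≤ L(xy)`. -/
def RightInclined {V : Type} [Fintype V] (G : EOBigraph V) (e : Sym2 V) : Prop :=
  ∃ x y : V, e = s(x, y) ∧ e ∈ G.toEOGraph.graph.edgeSet ∧
    G.side x = false ∧ G.side y = true ∧
    DegTwo G.toEOGraph x ∧ DegTwo G.toEOGraph y ∧
    secondLabel G.toEOGraph y < secondLabel G.toEOGraph x ∧
    secondLabel G.toEOGraph x ≤ G.toEOGraph.label e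

/-- `G_l`: the spanning sub-bigraph of the left inclined edges of `G`. -/
def inclinedLeftSub {V : Type} [Fintype V] (G : EOBigraph V) : EOBigraph V :=
  bigraphRestrict G (LeftInclined G)

/-- `G_r`: the spanning sub-bigraph of the right inclined edges of `G`. -/
def inclinedRightSub {V : Type} [Fintype V] (G : EOBigraph V) : EOBigraph V :=
  bigraphRestrict G (RightInclined G)

/-- The underlying simple graph of `P` is a path. -/
def IsPathEO {V : Type} [Fintype V] (P : EOGraph V) : Prop :=
  ∃ (k : ℕ) (f : V ≃ Fin k), ∀ a b, P.graph.Adj a b ↔ (SimpleGraph.pathGraph k).Adj (f a) (f b)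

/-- A monotone path: the labels increase (or decrease) monotonically along the path. -/
def IsMonotonePath {V : Type} [Fintype V] (P : EOGraph V) : Prop :=
  ∃ (k : ℕ) (w : Fin k → ℝ) (hw : Function.Injective w),
    (StrictMono w ∨ StrictAnti w) ∧ EOIsoTo (pathEO k w hw) P

/-- A flipped path: obtained from a monotone path (with at least 3 edges) by swapping
either the two smallest or the two largest labels. -/
def IsFlippedPath {V : Type} [Fintype V] (P : EOGraph V) : Prop :=
  ∃ (k : ℕ) (hk : 4 ≤ k) (w : Fin k → ℝ) (hw : StrictMono w),
    EOIsoTo (pathEO k (w ∘ (Equiv.swap (⟨0, by omega⟩ : Fin k) ⟨1, by omega⟩))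
      (hw.injective.comp (Equiv.injective _))) P ∨
    EOIsoTo (pathEO k (w ∘ (Equiv.swap (⟨k-3, by omega⟩ : Fin k) ⟨k-2, by omega⟩))
      (hw.injective.comp (Equiv.injective _))) P

/-- 0-1 matrix containment: `A` contains `B` if `B` can be obtained from a submatrix of `A`
by possibly changing some 1 entries to 0. -/
def MContains {m n p q : ℕ} (A : Fin m → Fin n → Bool) (B : Fin p → Fin q → Bool) : Prop :=
  ∃ (r : Fin p → Fin m) (c : Fin q → Fin n), StrictMono r ∧ StrictMono c ∧
    ∀ i j, B i j = true → A (r i) (c j) = true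

/-- The extremal function of a 0-1 matrix `B`: the maximum number of 1 entries in an
`n × n` 0-1 matrix avoiding `B`. -/
noncomputable def mex {p q : ℕ} (n : ℕ) (B : Fin p → Fin q → Bool) : ℕ :=
  sSup {k | ∃ A : Fin n → Fin n → Bool, ¬ MContains A B ∧
    k = (Finset.univ.filter fun ij : Fin n × Fin n => A ij.1 ij.2 = true).card}

/-- The staircase with positions `p 0, …, p t` describes the matrix `A`. -/
def DescribedBy {nr nc : ℕ} (A : Fin nr → Fin nc → Bool) (t : ℕ)
    (p : Fin (t + 1) → Fin nr × Fin nc) : Prop :=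
  (∀ k : Fin t,
      ((p k.succ).1.val = (p k.castSucc).1.val + 1 ∧ (p k.succ).2 = (p k.castSucc).2) ∨
      ((p k.succ).1 = (p k.castSucc).1 ∧ (p k.succ).2.val = (p k.castSucc).2.val + 1)) ∧
  ∀ i j, A i j = true ↔
    ((∃ k, p k = (i, j)) ∨
     (i = (p 0).1 ∧ j < (p 0).2) ∨ (j = (p 0).2 ∧ i < (p 0).1) ∨
     (i = (p (Fin.last t)).1 ∧ (p (Fin.last t)).2 < j) ∨
     (j = (p (Fin.last t)).2 ∧ (p (Fin.last t)).1 < i))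

/-- A staircase matrix: `A`, or `A` with the order of its columns reversed, is described
by a staircase. -/
def IsStaircaseMatrix {nr nc : ℕ} (A : Fin nr → Fin nc → Bool) : Prop :=
  (∃ t p, DescribedBy A t p) ∨ (∃ t p, DescribedBy (fun i j => A i j.rev) t p)

/-- The bipartite graph whose bipartite adjacency matrix is `A`. -/
def MatrixGraph {nr nc : ℕ} (A : Fin nr → Fin nc → Bool) : SimpleGraph (Fin nr ⊕ Fin nc) :=
  SimpleGraph.fromRel fun u v =>
    match u, v with
    | .inl i, .inr j => A i j = true
    | _, _ => False

/-- A connected 0-1 matrix: the bipartite adjacency matrix of a connected graph. -/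
def IsConnectedMatrix {nr nc : ℕ} (A : Fin nr → Fin nc → Bool) : Prop :=
  (MatrixGraph A).Connected

lemma Set.Finite.exists_ne_le_sInf_diff_sInf {S : Set ℝ} (hS : S.Finite)
    (h : 1 < S.ncard) :
    ∃ a ∈ S, ∃ b ∈ S, a ≠ b ∧ a ≤ sInf (S \ {sInf S}) ∧ b ≤ sInf (S \ {sInf S}) := by
  obtain ⟨c, hc, hc'⟩ := Set.exists_ne_of_one_lt_ncard h (sInf S)
  have hmin : sInf S ∈ S := Set.Nonempty.csInf_mem ⟨c, hc⟩ hS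
  have hsecond : sInf (S \ {sInf S}) ∈ S \ {sInf S} :=
    Set.Nonempty.csInf_mem ⟨c, hc, hc'⟩ hS.sdiff
  exact ⟨sInf S, hmin, _, hsecond.1, fun h => hsecond.2 h.symm,
    csInf_le hS.bddBelow hsecond.1, le_rfl⟩

lemma pathGraph_mem_edgeSet_iff {n : ℕ} {e : Sym2 (Fin (n + 1))} :
    e ∈ (SimpleGraph.pathGraph (n + 1)).edgeSet ↔ ∃ i : Fin n, e = s(i.castSucc, i.succ) := by
  constructor
  · intro he
    obtain ⟨i, j, rfl, hij⟩ := pathGraph_edge_form he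
    exact ⟨⟨i, by omega⟩, by congr 1; ext; simp [hij]⟩
  · rintro ⟨i, rfl⟩
    simp [SimpleGraph.pathGraph_adj]

lemma pathLabel_castSucc_succ {n : ℕ} (w : Fin (n + 1) → ℝ) (i : Fin n) :
    pathLabel w s(i.castSucc, i.succ) = w i.castSucc := by
  simp [pathLabel, (Fin.castSucc_lt_succ (i := i)).le]

section

variable {V : Type} [Fintype V]

lemma exists_adj_ne_label_le_secondLabel {G : EOGraph V} {v : V} (hv : DegTwo G v) (u : V) :
    ∃ w, w ≠ u ∧ G.graph.Adj v w ∧ G.label s(v, w) ≤ secondLabel G v := by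
  set T := {e | e ∈ G.graph.edgeSet ∧ v ∈ e}
  have hinj : Set.InjOn G.label T := fun e he f hf => G.inj e he.1 f hf.1
  have hcard : 1 < (incidentLabels G v).ncard := by
    rw [incidentLabels, hinj.ncard_image]; exact hv
  obtain ⟨_, ⟨e₁, he₁, rfl⟩, _, ⟨e₂, he₂, rfl⟩, hne, hle₁, hle₂⟩ :=
    ((Set.toFinite T).image G.label).exists_ne_le_sInf_diff_sInf hcard
  obtain ⟨w₁, rfl⟩ := Sym2.mem_iff_exists.mp he₁.2
  obtain ⟨w₂, rfl⟩ := Sym2.mem_iff_exists.mp he₂.2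
  by_cases hw₁ : w₁ = u
  · refine ⟨w₂, fun hw₂ => hne ?_, he₂.1, hle₂⟩
    rw [hw₁, hw₂]
  · exact ⟨w₁, hw₁, he₁.1, hle₁⟩

structure IsPathEmbedding (G : EOBigraph V) {n : ℕ} (v : Fin (n + 1) → ℕ) (b : Bool)
    (f : Fin (n + 1) → V) : Prop where
  injective : Function.Injective f
  adj : ∀ i : Fin n, G.toEOGraph.graph.Adj (f i.castSucc) (f i.succ)
  label_lt : ∀ i j : Fin n, v i.castSucc < v j.castSucc →
    G.toEOGraph.label s(f i.castSucc, f i.succ) < G.toEOGraph.label s(f j.castSucc, f j.succ)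
  side : ∀ i, G.side (f i) = if i.val % 2 = 0 then b else !b

lemma bContains_pathEOBig_iff {G : EOBigraph V} {n : ℕ} {v : Fin (n + 1) → ℕ}
    {hv : Function.Injective v} {b : Bool} :
    BContains G (pathEOBig (n + 1) v hv b) ↔ ∃ f, IsPathEmbedding G v b f := by
  have hedge (i : Fin n) : s(i.castSucc, i.succ) ∈ (SimpleGraph.pathGraph (n + 1)).edgeSet :=
    pathGraph_mem_edgeSet_iff.mpr ⟨i, rfl⟩
  constructor
  · rintro ⟨f, hinj, hadj, hlabel, hside⟩
    refine ⟨f, hinj, fun i => hadj _ _ (hedge i), fun i j hij => ?_, hside⟩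
    simpa using hlabel _ (hedge i) _ (hedge j)
      (by simpa [pathEOBig, pathEON, pathEO, pathLabel_castSucc_succ] using hij)
  · rintro ⟨f, hinj, hadj, hlabel, hside⟩
    refine ⟨f, hinj, fun a b hab => ?_, fun e he e' he' hee' => ?_, hside⟩
    · obtain ⟨i, hi⟩ := pathGraph_mem_edgeSet_iff.mp ((SimpleGraph.mem_edgeSet _).mpr hab)
      rcases Sym2.eq_iff.mp hi with ⟨rfl, rfl⟩ | ⟨rfl, rfl⟩
      exacts [hadj i, (hadj i).symm]
    · obtain ⟨i, rfl⟩ := pathGraph_mem_edgeSet_iff.mp he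
      obtain ⟨j, rfl⟩ := pathGraph_mem_edgeSet_iff.mp he'
      simpa using hlabel i j
        (by simpa [pathEOBig, pathEON, pathEO, pathLabel_castSucc_succ] using hee')

lemma bigraphRestrict_adj {G : EOBigraph V} {P : Sym2 V → Prop} {x y : V} :
    (bigraphRestrict G P).toEOGraph.graph.Adj x y ↔ G.toEOGraph.graph.Adj x y ∧ P s(x, y) := by
  simp only [bigraphRestrict, SimpleGraph.fromEdgeSet_adj]
  exact ⟨fun h => h.1, fun h => ⟨h, h.1.ne⟩⟩

lemma IsPathEmbedding.of_bigraphRestrict {G : EOBigraph V} {P : Sym2 V → Prop} {n : ℕ}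
    {v : Fin (n + 1) → ℕ} {b : Bool} {f : Fin (n + 1) → V}
    (hf : IsPathEmbedding (bigraphRestrict G P) v b f) : IsPathEmbedding G v b f :=
  ⟨hf.injective, fun i => (bigraphRestrict_adj.mp (hf.adj i)).1, hf.label_lt, hf.side⟩

lemma RightInclined.secondLabel_lt_le {G : EOBigraph V} {x y : V}
    (h : RightInclined G s(x, y)) (hx : G.side x = false) :
    DegTwo G.toEOGraph y ∧ secondLabel G.toEOGraph y < secondLabel G.toEOGraph x ∧
      secondLabel G.toEOGraph x ≤ G.toEOGraph.label s(x, y) := by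
  obtain ⟨x', y', hxy, -, hx', hy', -, hdeg, hlt, hle⟩ := h
  rcases Sym2.eq_iff.mp hxy with ⟨rfl, rfl⟩ | ⟨rfl, rfl⟩
  · exact ⟨hdeg, hlt, hxy ▸ hle⟩
  · simp [hx] at hy'

lemma exists_adj_label_lt_of_rightInclined {G : EOBigraph V} {x y z : V}
    (hxy : RightInclined G s(x, y)) (hxz : RightInclined G s(x, z)) (hx : G.side x = false)
    (u : V) :
    ∃ w, w ≠ u ∧ G.toEOGraph.graph.Adj y w ∧
      G.toEOGraph.label s(y, w) < G.toEOGraph.label s(x, y) ∧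
      G.toEOGraph.label s(y, w) < G.toEOGraph.label s(x, z) := by
  obtain ⟨hy, hlt, hle⟩ := hxy.secondLabel_lt_le hx
  obtain ⟨-, -, hle'⟩ := hxz.secondLabel_lt_le hx
  obtain ⟨w, hwu, hadj, hw⟩ := exists_adj_ne_label_le_secondLabel hy u
  exact ⟨w, hwu, hadj, by linarith, by linarith⟩

lemma IsPathEmbedding.cons {G : EOBigraph V} {n : ℕ} {v : Fin (n + 1) → ℕ}
    {v' : Fin (n + 2) → ℕ} {b : Bool} {f : Fin (n + 1) → V} (hf : IsPathEmbedding G v b f)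
    {w : V} (hw : w ∉ Set.range f) (hadj : G.toEOGraph.graph.Adj w (f 0))
    (hside : G.side w = !b)
    (hlt : ∀ i : Fin n,
      G.toEOGraph.label s(w, f 0) < G.toEOGraph.label s(f i.castSucc, f i.succ))
    (hv'₀ : ∀ i : Fin n, v' 0 < v' i.succ.castSucc)
    (hv' : ∀ i j : Fin n,
      v' i.succ.castSucc < v' j.succ.castSucc → v i.castSucc < v j.castSucc) :
    IsPathEmbedding G v' (!b) (Fin.cons w f) where
  injective := Fin.cons_injective_iff.mpr ⟨hw, hf.injective⟩
  adj i := by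
    cases i using Fin.cases with
    | zero => simpa using hadj
    | succ i => simpa [← Fin.succ_castSucc] using hf.adj i
  label_lt i j hij := by
    cases i using Fin.cases <;> cases j using Fin.cases
    · exact absurd hij (lt_irrefl _)
    · simpa [← Fin.succ_castSucc] using hlt _
    · exact absurd hij (lt_asymm (hv'₀ _))
    · simpa [← Fin.succ_castSucc] using hf.label_lt _ _ (hv' _ _ hij)
  side i := by
    cases i using Fin.cases with
    | zero => simpa using hside
    | succ i =>
      rw [Fin.cons_succ, hf.side i, Fin.val_succ]
      rcases Nat.mod_two_eq_zero_or_one i with h | h <;> simp [h, Nat.succ_mod_two_eq_zero_iff]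

end

/-- If an edge-ordered bigraph `G` avoids `P₆^{-13254}`, then the spanning
subgraph `G_r` of its right inclined edges avoids `P₅^{+2143}`. -/
theorem stmt_16 {V : Type} [Fintype V] (G : EOBigraph V) (h : ¬ BContains G P6minus_13254) :
    ¬ BContains (inclinedRightSub G) P5plus_2143 := by
  intro hc
  apply h
  rw [P5plus_2143, bContains_pathEOBig_iff] at hc
  rw [P6minus_13254, bContains_pathEOBig_iff]
  obtain ⟨f, hf⟩ := hc
  have hinclined (i : Fin 4) : RightInclined G s(f i.castSucc, f i.succ) :=
    (bigraphRestrict_adj.mp (hf.adj i)).2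
  replace hf := hf.of_bigraphRestrict
  -- `f 1` is the only other left vertex of the path, and `hlt₀` keeps `w` away from it.
  obtain ⟨w, hw₃, hadj, hlt₀, hlt₁⟩ := exists_adj_label_lt_of_rightInclined (x := f 1)
    (by rw [Sym2.eq_swap]; exact hinclined 0) (hinclined 1) (hf.side 1) (f 3)
  have hw : G.side w = false := by
    simpa [hf.side 0] using (G.proper _ _ hadj).symm
  have hmin : ∀ i : Fin 4, i ≠ 1 →
      ![2, 1, 4, 3, 0] (1 : Fin 4).castSucc < ![2, 1, 4, 3, 0] i.castSucc := by
    decide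
  refine ⟨Fin.cons w f, hf.cons ?_ hadj.symm hw ?_ (by decide) (by decide)⟩
  · rintro ⟨i, rfl⟩
    fin_cases i
    · exact hadj.ne rfl
    · exact hlt₀.ne (congrArg _ Sym2.eq_swap)
    · simp [hf.side 2] at hw
    · exact hw₃ rfl
    · simp [hf.side 4] at hw
  · intro i
    rw [Sym2.eq_swap]
    rcases eq_or_ne i 1 with rfl | hi
    · exact hlt₁
    · exact hlt₁.trans (hf.label_lt 1 i (hmin i hi))
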